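/- arXiv:2310.10559 — 4 statements merged into one kernel-verified Lean document; each statement's English description precedes it below -/
import Mathlib

section
/- Augmented CATE identifiability: suppose the triple (Y₀, Y₁, U) is conditionally independent of W given σ(H), consistency holds (Y = W·Y₁ + (1−W)·Y₀), and overlap holds (0 < E[W | σ(H)] < 1 almost surely). Then, writing 𝓖' = σ(H) ⊔ σ(U), one has 0 < E[W | 𝓖'] < 1 almost surely, and almost surely E[Y₁ − Y₀ | 𝓖'] = E[W·Y | 𝓖'] / E[W | 𝓖'] − E[(1−W)·Y | 𝓖'] / E[(1−W) | 𝓖']. -/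
/-!
Conditional independence of `σ(Y₀, Y₁, U)` and `W` given `σ(H)` means that, for every event `D`
of `W`, `P(D | σ(H) ⊔ σ(Y₀, Y₁, U)) = P(D | σ(H))`: both sides have the same integral over the
π-system of intersections `B ∩ C`, `B ∈ σ(H)`, `C ∈ σ(Y₀, Y₁, U)`. By the tower property the
propensity `e = P(W = 1 | σ(H))` is then also `P(W = 1 | 𝓖')` for every `σ(H) ≤ 𝓖' ≤
σ(H) ⊔ σ(Y₀, Y₁, U)`, which gives overlap for `𝓖'`, and conditioning first on the larger
σ-algebra, where `Y₁` can be pulled out, gives `E[Y₁ W | 𝓖'] = e E[Y₁ | 𝓖']`; similarly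
`E[Y₀ (1 - W) | 𝓖'] = (1 - e) E[Y₀ | 𝓖']`. By consistency `W Y = Y₁ W` and
`(1 - W) Y = Y₀ (1 - W)`, so dividing by `e` and `1 - e` identifies `E[Y₁ - Y₀ | 𝓖']`.
-/

open MeasureTheory ProbabilityTheory Set

section PiSystem

variable {Ω : Type*} {m mΩ : MeasurableSpace Ω}

theorem IsPiSystem.image2_inter {S T : Set (Set Ω)} (hS : IsPiSystem S) (hT : IsPiSystem T) :
    IsPiSystem (image2 (· ∩ ·) S T) := by
  rintro _ ⟨s, hs, t, ht, rfl⟩ _ ⟨s', hs', t', ht', rfl⟩ hne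
  rw [inter_inter_inter_comm] at hne ⊢
  exact mem_image2_of_mem (hS s hs s' hs' (hne.mono inter_subset_left))
    (hT t ht t' ht' (hne.mono inter_subset_right))

theorem MeasurableSpace.sup_eq_generateFrom_image2_inter (m₁ m₂ : MeasurableSpace Ω) :
    m₁ ⊔ m₂ =
      generateFrom (image2 (· ∩ ·) {s | MeasurableSet[m₁] s} {t | MeasurableSet[m₂] t}) := by
  refine le_antisymm (sup_le (fun s hs => ?_) (fun t ht => ?_)) (generateFrom_le ?_)
  · exact measurableSet_generateFrom ⟨s, hs, univ, .univ, inter_univ s⟩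
  · exact measurableSet_generateFrom ⟨univ, .univ, t, ht, univ_inter t⟩
  · rintro _ ⟨s, hs, t, ht, rfl⟩
    exact (le_sup_left (b := m₂) s hs).inter (le_sup_right (a := m₁) t ht)

variable {μ : Measure Ω} {f g : Ω → ℝ}

theorem setIntegral_eq_setIntegral_of_isPiSystem (hm : m ≤ mΩ) {S : Set (Set Ω)}
    (h_eq : m = MeasurableSpace.generateFrom S) (hS : IsPiSystem S)
    (hf : Integrable f μ) (hg : Integrable g μ)
    (basic : ∀ t ∈ S, ∫ x in t, f x ∂μ = ∫ x in t, g x ∂μ)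
    (h_univ : ∫ x, f x ∂μ = ∫ x, g x ∂μ) {t : Set Ω} (ht : MeasurableSet[m] t) :
    ∫ x in t, f x ∂μ = ∫ x in t, g x ∂μ := by
  induction t, ht using MeasurableSpace.induction_on_inter h_eq hS with
  | empty => simp
  | basic t ht => exact basic t ht
  | compl t htm iht =>
    have hf_split := integral_add_compl (hm t htm) hf
    have hg_split := integral_add_compl (hm t htm) hg
    linarith
  | iUnion F hFd hFm ihF =>
    rw [integral_iUnion (fun i => hm _ (hFm i)) hFd hf.integrableOn,
      integral_iUnion (fun i => hm _ (hFm i)) hFd hg.integrableOn]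
    exact tsum_congr ihF

theorem setIntegral_eq_setIntegral_of_forall_inter {m₁ m₂ : MeasurableSpace Ω}
    (hm₁ : m₁ ≤ mΩ) (hm₂ : m₂ ≤ mΩ) (hf : Integrable f μ) (hg : Integrable g μ)
    (h : ∀ s t, MeasurableSet[m₁] s → MeasurableSet[m₂] t →
      ∫ x in s ∩ t, f x ∂μ = ∫ x in s ∩ t, g x ∂μ)
    {s : Set Ω} (hs : MeasurableSet[m₁ ⊔ m₂] s) :
    ∫ x in s, f x ∂μ = ∫ x in s, g x ∂μ := by
  refine setIntegral_eq_setIntegral_of_isPiSystem (sup_le hm₁ hm₂)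
    (MeasurableSpace.sup_eq_generateFrom_image2_inter m₁ m₂)
    ((@MeasurableSpace.isPiSystem_measurableSet Ω m₁).image2_inter
      (@MeasurableSpace.isPiSystem_measurableSet Ω m₂)) hf hg ?_ ?_ hs
  · rintro _ ⟨s, hs, t, ht, rfl⟩
    exact h s t hs ht
  · simpa using h univ univ .univ .univ

end PiSystem

theorem condExp_mul_of_condExp_ae_eq {Ω : Type*} {m m₂ mΩ : MeasurableSpace Ω} {μ : Measure Ω}
    [IsFiniteMeasure μ] (hm : m ≤ m₂) (hm₂ : m₂ ≤ mΩ) {f w e : Ω → ℝ}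
    (hf : StronglyMeasurable[m₂] f) (he : StronglyMeasurable[m] e) (hw : μ[w | m₂] =ᵐ[μ] e)
    (hf_int : Integrable f μ) (hw_int : Integrable w μ)
    (hfw : Integrable (f * w) μ) (hef : Integrable (e * f) μ) :
    μ[f * w | m] =ᵐ[μ] e * μ[f | m] := by
  have hfw_m₂ : μ[f * w | m₂] =ᵐ[μ] e * f := by
    filter_upwards [condExp_mul_of_stronglyMeasurable_left hf hfw hw_int, hw] with x hx hwx
    rw [hx, Pi.mul_apply, hwx, mul_comm, Pi.mul_apply]
  calc μ[f * w | m] =ᵐ[μ] μ[μ[f * w | m₂] | m] := (condExp_condExp_of_le hm hm₂).symm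
    _ =ᵐ[μ] μ[e * f | m] := condExp_congr_ae hfw_m₂
    _ =ᵐ[μ] e * μ[f | m] := condExp_mul_of_stronglyMeasurable_left he hef hf_int

namespace ProbabilityTheory.CondIndep

variable {Ω : Type*} {m m' m₁ m₂ mΩ : MeasurableSpace Ω} [StandardBorelSpace Ω] {hm' : m' ≤ mΩ}
  {μ : Measure Ω} [IsFiniteMeasure μ] {D : Set Ω}

theorem condExp_indicator_sup (hm₁ : m₁ ≤ mΩ) (hm₂ : m₂ ≤ mΩ)
    (h : CondIndep m' m₁ m₂ hm' μ) (hD : MeasurableSet[m₂] D) :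
    μ⟦D | m' ⊔ m₁⟧ =ᵐ[μ] μ⟦D | m'⟧ := by
  set e := μ⟦D | m'⟧
  have hD_int : Integrable (D.indicator fun _ => (1 : ℝ)) μ :=
    (integrable_const 1).indicator (hm₂ D hD)
  refine (ae_eq_condExp_of_forall_setIntegral_eq (sup_le hm' hm₁) hD_int
    (fun _ _ _ => integrable_condExp.integrableOn) (fun s hs _ => ?_)
    (stronglyMeasurable_condExp.mono (le_sup_left : m' ≤ m' ⊔ m₁)).aestronglyMeasurable).symm
  refine setIntegral_eq_setIntegral_of_forall_inter hm' hm₁ integrable_condExp hD_int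
    (fun B C hB hC => ?_) hs
  have hCΩ := hm₁ C hC
  have hind : e * C.indicator (fun _ => 1) = C.indicator e := by
    ext x; by_cases hx : x ∈ C <;> simp [hx]
  have hind_int : Integrable (e * C.indicator fun _ => 1) μ :=
    hind ▸ integrable_condExp.indicator hCΩ
  -- pull out `e = μ⟦D | m'⟧`, then factorize `μ⟦C | m'⟧ μ⟦D | m'⟧` by conditional independence
  have hCD : μ[e * C.indicator (fun _ => 1) | m'] =ᵐ[μ] μ⟦C ∩ D | m'⟧ := by
    filter_upwards [condExp_mul_of_stronglyMeasurable_left stronglyMeasurable_condExp hind_int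
        ((integrable_const 1).indicator hCΩ),
      (condIndep_iff _ _ _ hm' hm₁ hm₂ μ).1 h C D hC hD] with x hx hCDx
    rw [hx, hCDx, Pi.mul_apply, Pi.mul_apply, mul_comm]
  calc ∫ x in B ∩ C, e x ∂μ = ∫ x in B, (e * C.indicator fun _ => 1 : Ω → ℝ) x ∂μ := by
        rw [hind, setIntegral_indicator hCΩ]
    _ = ∫ x in B, μ[e * C.indicator (fun _ => 1) | m'] x ∂μ :=
        (setIntegral_condExp hm' hind_int hB).symm
    _ = ∫ x in B, (μ⟦C ∩ D | m'⟧) x ∂μ :=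
        setIntegral_congr_ae (hm' B hB) (hCD.mono fun x hx _ => hx)
    _ = ∫ x in B ∩ C, D.indicator (fun _ => (1 : ℝ)) x ∂μ := by
        rw [setIntegral_condExp hm' ((integrable_const 1).indicator (hCΩ.inter (hm₂ D hD))) hB,
          ← indicator_indicator, setIntegral_indicator hCΩ]

theorem condExp_indicator_of_le_sup (hm₁ : m₁ ≤ mΩ) (hm₂ : m₂ ≤ mΩ)
    (h : CondIndep m' m₁ m₂ hm' μ) (hm'm : m' ≤ m) (hm : m ≤ m' ⊔ m₁)
    (hD : MeasurableSet[m₂] D) :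
    μ⟦D | m⟧ =ᵐ[μ] μ⟦D | m'⟧ := by
  calc (μ⟦D | m⟧) =ᵐ[μ] μ[μ⟦D | m' ⊔ m₁⟧ | m] := (condExp_condExp_of_le hm (sup_le hm' hm₁)).symm
    _ =ᵐ[μ] μ[μ⟦D | m'⟧ | m] := condExp_congr_ae (h.condExp_indicator_sup hm₁ hm₂ hD)
    _ = μ⟦D | m'⟧ := condExp_of_stronglyMeasurable (hm.trans (sup_le hm' hm₁))
        (stronglyMeasurable_condExp.mono hm'm) integrable_condExp

theorem condExp_mul_indicator_of_le_sup (hm₁ : m₁ ≤ mΩ) (hm₂ : m₂ ≤ mΩ)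
    (h : CondIndep m' m₁ m₂ hm' μ) (hm'm : m' ≤ m) (hm : m ≤ m' ⊔ m₁)
    (hD : MeasurableSet[m₂] D) {g : Ω → ℝ} (hg : StronglyMeasurable[m₁] g)
    (hg_int : Integrable g μ) :
    μ[g * D.indicator (fun _ => 1) | m] =ᵐ[μ] μ⟦D | m'⟧ * μ[g | m] := by
  have hDΩ := hm₂ D hD
  have he_le_one : ∀ᵐ x ∂μ, ‖(μ⟦D | m'⟧) x‖ ≤ 1 :=
    ae_bdd_abs_condExp_of_ae_bdd_abs (.of_forall fun x => by
      by_cases hx : x ∈ D <;> simp [hx])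
  have hgD : g * D.indicator (fun _ => 1) = D.indicator g := by
    ext x; by_cases hx : x ∈ D <;> simp [hx]
  refine condExp_mul_of_condExp_ae_eq hm (sup_le hm' hm₁) (hg.mono le_sup_right)
    (stronglyMeasurable_condExp.mono hm'm) (h.condExp_indicator_sup hm₁ hm₂ hD) hg_int
    ((integrable_const 1).indicator hDΩ) (hgD ▸ hg_int.indicator hDΩ) ?_
  exact hg_int.bdd_mul (stronglyMeasurable_condExp.mono hm').aestronglyMeasurable he_le_one

theorem cate_identification_of_le_sup (hm₁ : m₁ ≤ mΩ) (hm₂ : m₂ ≤ mΩ)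
    (h : CondIndep m' m₁ m₂ hm' μ) (hm'm : m' ≤ m) (hm : m ≤ m' ⊔ m₁)
    {Y₀ Y₁ W Y : Ω → ℝ} (hY₀ : StronglyMeasurable[m₁] Y₀) (hY₁ : StronglyMeasurable[m₁] Y₁)
    (hW : Measurable[m₂] W) (hY₀int : Integrable Y₀ μ) (hY₁int : Integrable Y₁ μ)
    (hWvals : ∀ ω, W ω = 0 ∨ W ω = 1)
    (hconsistency : ∀ ω, Y ω = W ω * Y₁ ω + (1 - W ω) * Y₀ ω)
    (hoverlap : ∀ᵐ ω ∂μ, 0 < (μ[W | m']) ω ∧ (μ[W | m']) ω < 1) :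
    (∀ᵐ ω ∂μ, 0 < (μ[W | m]) ω ∧ (μ[W | m]) ω < 1) ∧
    ∀ᵐ ω ∂μ,
      (μ[fun ω => Y₁ ω - Y₀ ω | m]) ω =
        (μ[fun ω => W ω * Y ω | m]) ω / (μ[W | m]) ω
        - (μ[fun ω => (1 - W ω) * Y ω | m]) ω / (μ[fun ω => 1 - W ω | m]) ω := by
  have hD₁ : W = (W ⁻¹' {1}).indicator fun _ => 1 := by
    ext ω; rcases hWvals ω with hω | hω <;> simp [hω]
  have hD₀ : (fun ω => 1 - W ω) = (W ⁻¹' {0}).indicator fun _ => 1 := by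
    ext ω; rcases hWvals ω with hω | hω <;> simp [hω]
  have hD₁m : MeasurableSet[m₂] (W ⁻¹' {1}) := hW (measurableSet_singleton 1)
  have hD₀m : MeasurableSet[m₂] (W ⁻¹' {0}) := hW (measurableSet_singleton 0)
  have hprop₁ : μ[W | m] =ᵐ[μ] μ[W | m'] := by
    rw [hD₁]; exact h.condExp_indicator_of_le_sup hm₁ hm₂ hm'm hm hD₁m
  have hprop₀ : μ[fun ω => 1 - W ω | m] =ᵐ[μ] μ[fun ω => 1 - W ω | m'] := by
    rw [hD₀]; exact h.condExp_indicator_of_le_sup hm₁ hm₂ hm'm hm hD₀m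
  have htreated : μ[fun ω => W ω * Y ω | m] =ᵐ[μ] μ[W | m'] * μ[Y₁ | m] := by
    have hWY : (fun ω => W ω * Y ω) = Y₁ * W := by
      ext ω; rcases hWvals ω with hω | hω <;> simp [hconsistency ω, hω]
    rw [hWY, hD₁]; exact h.condExp_mul_indicator_of_le_sup hm₁ hm₂ hm'm hm hD₁m hY₁ hY₁int
  have hcontrol : μ[fun ω => (1 - W ω) * Y ω | m] =ᵐ[μ]
      μ[fun ω => 1 - W ω | m'] * μ[Y₀ | m] := by
    have hW'Y : (fun ω => (1 - W ω) * Y ω) = Y₀ * fun ω => 1 - W ω := by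
      ext ω; rcases hWvals ω with hω | hω <;> simp [hconsistency ω, hω]
    rw [hW'Y, hD₀]; exact h.condExp_mul_indicator_of_le_sup hm₁ hm₂ hm'm hm hD₀m hY₀ hY₀int
  have hcompl : μ[fun ω => 1 - W ω | m'] =ᵐ[μ] fun ω => 1 - (μ[W | m']) ω := by
    have hW_int : Integrable W μ := hD₁ ▸ (integrable_const 1).indicator (hm₂ _ hD₁m)
    filter_upwards [condExp_sub (integrable_const (1 : ℝ)) hW_int m'] with ω hω
    rw [show (fun ω => 1 - W ω) = (fun _ => (1 : ℝ)) - W from rfl, hω, Pi.sub_apply,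
      condExp_const (hm'm.trans (hm.trans (sup_le hm' hm₁)))]
  refine ⟨by filter_upwards [hprop₁, hoverlap] with ω hω hω'; rwa [hω], ?_⟩
  filter_upwards [hprop₁, hprop₀, htreated, hcontrol, hcompl, hoverlap,
    condExp_sub hY₁int hY₀int m] with ω h₁ h₀ ht hc he ho hsub
  have hdiff : (fun ω => Y₁ ω - Y₀ ω) = Y₁ - Y₀ := rfl
  rw [hdiff, hsub, h₁, h₀, ht, hc, Pi.mul_apply, Pi.mul_apply, he, Pi.sub_apply,
    mul_div_cancel_left₀ _ ho.1.ne', mul_div_cancel_left₀ _ (sub_pos.2 ho.2).ne']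

end ProbabilityTheory.CondIndep

theorem augmented_cate_identifiability_general
    {Ω : Type*} [mΩ : MeasurableSpace Ω] [StandardBorelSpace Ω]
    {𝓗 𝓤 : Type*} [MeasurableSpace 𝓗] [MeasurableSpace 𝓤]
    (P : Measure Ω) [IsProbabilityMeasure P]
    (Y₀ Y₁ W Y : Ω → ℝ) (H : Ω → 𝓗) (U : Ω → 𝓤)
    (hY₀ : Measurable Y₀) (hY₁ : Measurable Y₁)
    (hW : Measurable W) (hH : Measurable H) (hU : Measurable U)
    (hY₀int : Integrable Y₀ P) (hY₁int : Integrable Y₁ P)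
    (hWvals : ∀ ω, W ω = 0 ∨ W ω = 1)
    (hconsistency : ∀ ω, Y ω = W ω * Y₁ ω + (1 - W ω) * Y₀ ω)
    (hignorability : CondIndepFun (MeasurableSpace.comap H inferInstance) hH.comap_le
      (fun ω => (Y₀ ω, Y₁ ω, U ω)) W P)
    (hoverlap : ∀ᵐ ω ∂P,
      0 < (P[W | MeasurableSpace.comap H inferInstance]) ω ∧
        (P[W | MeasurableSpace.comap H inferInstance]) ω < 1)
    (𝓖' : MeasurableSpace Ω)
    (h𝓖' : 𝓖' = MeasurableSpace.comap H inferInstance ⊔ MeasurableSpace.comap U inferInstance) :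
    (∀ᵐ ω ∂P, 0 < (P[W | 𝓖']) ω ∧ (P[W | 𝓖']) ω < 1) ∧
    ∀ᵐ ω ∂P,
      (P[fun ω => Y₁ ω - Y₀ ω | 𝓖']) ω =
        (P[fun ω => W ω * Y ω | 𝓖']) ω / (P[W | 𝓖']) ω
        - (P[fun ω => (1 - W ω) * Y ω | 𝓖']) ω / (P[fun ω => 1 - W ω | 𝓖']) ω := by
  subst h𝓖'
  have hV : Measurable fun ω => (Y₀ ω, Y₁ ω, U ω) := hY₀.prodMk (hY₁.prodMk hU)
  have hV_comap := comap_measurable (m := inferInstance) fun ω => (Y₀ ω, Y₁ ω, U ω)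
  have hU_le : MeasurableSpace.comap U inferInstance ≤
      MeasurableSpace.comap (fun ω => (Y₀ ω, Y₁ ω, U ω)) inferInstance :=
    Measurable.comap_le (f := U) ((measurable_snd.comp measurable_snd).comp hV_comap)
  exact ((condIndepFun_iff_condIndep _ _ _ _ _).1 hignorability).cate_identification_of_le_sup
    hV.comap_le hW.comap_le le_sup_left (sup_le_sup_left hU_le _)
    (measurable_fst.comp hV_comap).stronglyMeasurable
    ((measurable_fst.comp measurable_snd).comp hV_comap).stronglyMeasurable
    (comap_measurable W) hY₀int hY₁int hWvals hconsistency hoverlap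

/-- **Augmented CATE identifiability** (Proposition 2): if the triple `(Y₀, Y₁, U)` is
conditionally independent of `W` given `σ(H)`, consistency holds, and overlap holds for
`σ(H)`, then overlap holds for the augmented σ-algebra `𝓖' = σ(H) ⊔ σ(U)` and the
CATE augmented with the adjustment variables `U` is identified. -/
theorem augmented_cate_identifiability
    {Ω : Type*} [mΩ : MeasurableSpace Ω] [StandardBorelSpace Ω]
    {𝓗 𝓤 : Type*} [MeasurableSpace 𝓗] [MeasurableSpace 𝓤] [StandardBorelSpace 𝓤]
    (P : Measure Ω) [IsProbabilityMeasure P]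
    (Y₀ Y₁ W Y : Ω → ℝ) (H : Ω → 𝓗) (U : Ω → 𝓤)
    (hY₀ : Measurable Y₀) (hY₁ : Measurable Y₁)
    (hW : Measurable W) (hH : Measurable H) (hU : Measurable U)
    (hY₀int : Integrable Y₀ P) (hY₁int : Integrable Y₁ P)
    (hWvals : ∀ ω, W ω = 0 ∨ W ω = 1)
    (hconsistency : ∀ ω, Y ω = W ω * Y₁ ω + (1 - W ω) * Y₀ ω)
    (hignorability : CondIndepFun (MeasurableSpace.comap H inferInstance) hH.comap_le
      (fun ω => (Y₀ ω, Y₁ ω, U ω)) W P)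
    (hoverlap : ∀ᵐ ω ∂P,
      0 < (P[W | MeasurableSpace.comap H inferInstance]) ω ∧
        (P[W | MeasurableSpace.comap H inferInstance]) ω < 1)
    (𝓖' : MeasurableSpace Ω)
    (h𝓖' : 𝓖' = MeasurableSpace.comap H inferInstance ⊔ MeasurableSpace.comap U inferInstance) :
    (∀ᵐ ω ∂P, 0 < (P[W | 𝓖']) ω ∧ (P[W | 𝓖']) ω < 1) ∧
    ∀ᵐ ω ∂P,
      (P[fun ω => Y₁ ω - Y₀ ω | 𝓖']) ω =
        (P[fun ω => W ω * Y ω | 𝓖']) ω / (P[W | 𝓖']) ω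
        - (P[fun ω => (1 - W ω) * Y ω | 𝓖']) ω / (P[fun ω => 1 - W ω | 𝓖']) ω :=
  augmented_cate_identifiability_general (mΩ := mΩ) P Y₀ Y₁ W Y H U hY₀ hY₁ hW hH hU hY₀int hY₁int
    hWvals hconsistency hignorability hoverlap 𝓖' h𝓖'
end

section
/- An adjustment variable does not change the propensity score: if W : Ω → ℝ is a bounded measurable random variable and W is conditionally independent of the random variable U given a sub-σ-algebra 𝓖, then the conditional expectations coincide, E[W | 𝓖 ⊔ σ(U)] = E[W | 𝓖] almost everywhere. -/
open MeasureTheory ProbabilityTheory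

/-! Write `σ(W)`, `σ(U)` for the generated σ-algebras. For `t ∈ σ(W)`, conditional independence
gives, on the π-system of sets `G ∩ u` with `G ∈ 𝓖` and `u ∈ σ(U)`,
`∫_{G ∩ u} 1_t = ∫_G P⟦t|𝓖⟧ P⟦u|𝓖⟧ = ∫_{G ∩ u} P⟦t|𝓖⟧`, hence `P⟦t | 𝓖 ⊔ σ(U)⟧ = P⟦t | 𝓖⟧`
by Dynkin's π-λ theorem. For `W` itself, use this with the roles of `W` and `U` exchanged:
`∫_{G ∩ u} W = ∫_G W P⟦u | 𝓖 ⊔ σ(W)⟧ = ∫_G W P⟦u|𝓖⟧ = ∫_G P[W|𝓖] P⟦u|𝓖⟧ = ∫_{G ∩ u} P[W|𝓖]`,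
and conclude by the same π-λ argument. -/

namespace MeasureTheory

variable {Ω : Type*} {m m₁ m₂ mΩ : MeasurableSpace Ω} {P : Measure Ω}

lemma setIntegral_condExp_mul (hm : m ≤ mΩ) [SigmaFinite (P.trim hm)] {f g : Ω → ℝ} {s : Set Ω}
    (hs : MeasurableSet[m] s) (hg : StronglyMeasurable[m] g) (hfg : Integrable (f * g) P)
    (hf : Integrable f P) :
    ∫ ω in s, P[f | m] ω * g ω ∂P = ∫ ω in s, f ω * g ω ∂P := by
  refine (setIntegral_congr_ae (hm s hs) ?_).trans (setIntegral_condExp hm hfg hs)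
  exact (condExp_mul_of_stronglyMeasurable_right hg hfg hf).mono fun _ h _ => h.symm

lemma setIntegral_inter_eq_setIntegral_condExp_indicator_mul (hm : m ≤ mΩ) [IsFiniteMeasure P]
    {g : Ω → ℝ} {s t : Set Ω} (hs : MeasurableSet[m] s) (ht : MeasurableSet t)
    (hg : StronglyMeasurable[m] g) (hgi : Integrable g P) :
    ∫ ω in s ∩ t, g ω ∂P = ∫ ω in s, (P⟦t | m⟧) ω * g ω ∂P := by
  have hind : t.indicator (fun _ => (1 : ℝ)) * g = t.indicator g := by
    ext ω; by_cases hω : ω ∈ t <;> simp [hω]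
  rw [setIntegral_condExp_mul hm hs hg (hind ▸ hgi.indicator ht)
    ((integrable_const 1).indicator ht), ← setIntegral_indicator ht]
  simp_rw [← Pi.mul_apply, hind]

lemma norm_condExp_indicator_le_one [IsFiniteMeasure P] (t : Set Ω) :
    ∀ᵐ ω ∂P, ‖(P⟦t | m⟧) ω‖ ≤ 1 := by
  have h0 := condExp_nonneg (m := m) (μ := P) (f := t.indicator fun _ => (1 : ℝ))
    (.of_forall fun ω => Set.indicator_nonneg (fun _ _ => zero_le_one) ω)
  have h1 := condExp_le_nonneg_const (m := m) (μ := P) (f := t.indicator fun _ => (1 : ℝ))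
    zero_le_one (.of_forall fun ω => Set.indicator_le_self' (fun _ _ => zero_le_one) ω)
  filter_upwards [h0, h1] with ω h0 h1
  rwa [Real.norm_eq_abs, abs_of_nonneg h0]

lemma isPiSystem_image2_inter (m₁ m₂ : MeasurableSpace Ω) :
    IsPiSystem (Set.image2 (· ∩ ·) {s | MeasurableSet[m₁] s} {t | MeasurableSet[m₂] t}) := by
  rintro _ ⟨s₁, hs₁, t₁, ht₁, rfl⟩ _ ⟨s₂, hs₂, t₂, ht₂, rfl⟩ -
  refine ⟨s₁ ∩ s₂, hs₁.inter hs₂, t₁ ∩ t₂, ht₁.inter ht₂, ?_⟩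
  exact Set.inter_inter_inter_comm s₁ s₂ t₁ t₂

lemma generateFrom_image2_inter (m₁ m₂ : MeasurableSpace Ω) :
    MeasurableSpace.generateFrom
      (Set.image2 (· ∩ ·) {s | MeasurableSet[m₁] s} {t | MeasurableSet[m₂] t}) = m₁ ⊔ m₂ := by
  refine le_antisymm (MeasurableSpace.generateFrom_le ?_) (sup_le (fun s hs => ?_) fun t ht => ?_)
  · rintro _ ⟨s, hs, t, ht, rfl⟩
    exact (le_sup_left (b := m₂) s hs).inter (le_sup_right (a := m₁) t ht)
  · exact MeasurableSpace.measurableSet_generateFrom ⟨s, hs, Set.univ, .univ, Set.inter_univ s⟩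
  · exact MeasurableSpace.measurableSet_generateFrom ⟨Set.univ, .univ, t, ht, Set.univ_inter t⟩

lemma ae_eq_condExp_sup_of_forall_setIntegral_inter_eq (hm₁ : m₁ ≤ mΩ) (hm₂ : m₂ ≤ mΩ)
    [IsFiniteMeasure P] {f g : Ω → ℝ} (hf : Integrable f P) (hg : StronglyMeasurable[m₁] g)
    (hgi : Integrable g P)
    (h : ∀ s t, MeasurableSet[m₁] s → MeasurableSet[m₂] t →
      ∫ ω in s ∩ t, g ω ∂P = ∫ ω in s ∩ t, f ω ∂P) :
    g =ᵐ[P] P[f | m₁ ⊔ m₂] := by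
  have hle : m₁ ⊔ m₂ ≤ mΩ := sup_le hm₁ hm₂
  have hsets (A : Set Ω) (hA : MeasurableSet[m₁ ⊔ m₂] A) :
      ∫ ω in A, g ω ∂P = ∫ ω in A, f ω ∂P := by
    induction A, hA using MeasurableSpace.induction_on_inter
      (generateFrom_image2_inter m₁ m₂).symm (isPiSystem_image2_inter m₁ m₂) with
    | empty => simp
    | basic _ hst =>
      obtain ⟨s, hs, t, ht, rfl⟩ := hst
      exact h s t hs ht
    | compl A hA ih =>
      have huniv := h Set.univ Set.univ .univ .univ
      rw [Set.univ_inter, setIntegral_univ, setIntegral_univ] at huniv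
      rw [setIntegral_compl (hle A hA) hgi, setIntegral_compl (hle A hA) hf, ih, huniv]
    | iUnion A hdisj hA ih =>
      rw [integral_iUnion (fun i => hle _ (hA i)) hdisj hgi.integrableOn,
        integral_iUnion (fun i => hle _ (hA i)) hdisj hf.integrableOn]
      exact tsum_congr ih
  exact ae_eq_condExp_of_forall_setIntegral_eq hle hf (fun _ _ _ => hgi.integrableOn)
    (fun A hA _ => hsets A hA) (hg.mono (le_sup_left (b := m₂))).aestronglyMeasurable

end MeasureTheory

namespace ProbabilityTheory

variable {Ω : Type*} {m' m₁ m₂ mΩ : MeasurableSpace Ω} [StandardBorelSpace Ω]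
  {hm' : m' ≤ mΩ} {P : Measure Ω} [IsFiniteMeasure P]

theorem CondIndep.condExp_sup_indicator_eq (hindep : CondIndep m' m₁ m₂ hm' P) (hm₁ : m₁ ≤ mΩ)
    (hm₂ : m₂ ≤ mΩ) {t : Set Ω} (ht : MeasurableSet[m₁] t) :
    P⟦t | m' ⊔ m₂⟧ =ᵐ[P] P⟦t | m'⟧ := by
  have hprod := (condIndep_iff m' m₁ m₂ hm' hm₁ hm₂ P).1 hindep t
  refine (ae_eq_condExp_sup_of_forall_setIntegral_inter_eq hm' hm₂
    ((integrable_const 1).indicator (hm₁ t ht)) stronglyMeasurable_condExp integrable_condExp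
    fun s u hs hu => ?_).symm
  have htu : MeasurableSet (t ∩ u) := (hm₁ t ht).inter (hm₂ u hu)
  calc ∫ ω in s ∩ u, (P⟦t | m'⟧) ω ∂P
      = ∫ ω in s, (P⟦u | m'⟧) ω * (P⟦t | m'⟧) ω ∂P :=
        setIntegral_inter_eq_setIntegral_condExp_indicator_mul hm' hs (hm₂ u hu)
          stronglyMeasurable_condExp integrable_condExp
    _ = ∫ ω in s, (P⟦t ∩ u | m'⟧) ω ∂P :=
        setIntegral_congr_ae (hm' s hs)
          ((hprod u ht hu).mono fun ω h _ => by rw [h, Pi.mul_apply, mul_comm])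
    _ = ∫ ω in s ∩ u, t.indicator (fun _ => (1 : ℝ)) ω ∂P := by
        rw [setIntegral_condExp hm' ((integrable_const 1).indicator htu) hs,
          setIntegral_indicator htu, setIntegral_indicator (hm₁ t ht), Set.inter_assoc,
          Set.inter_comm u t]

theorem CondIndep.condExp_sup_eq (hindep : CondIndep m' m₁ m₂ hm' P) (hm₁ : m₁ ≤ mΩ)
    (hm₂ : m₂ ≤ mΩ) {f : Ω → ℝ} (hf : StronglyMeasurable[m₁] f) (hfi : Integrable f P) :
    P[f | m' ⊔ m₂] =ᵐ[P] P[f | m'] := by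
  refine (ae_eq_condExp_sup_of_forall_setIntegral_inter_eq hm' hm₂ hfi stronglyMeasurable_condExp
    integrable_condExp fun s t hs ht => ?_).symm
  have hswap := hindep.symm.condExp_sup_indicator_eq hm₂ hm₁ ht
  calc ∫ ω in s ∩ t, P[f | m'] ω ∂P
      = ∫ ω in s, (P⟦t | m'⟧) ω * P[f | m'] ω ∂P :=
        setIntegral_inter_eq_setIntegral_condExp_indicator_mul hm' hs (hm₂ t ht)
          stronglyMeasurable_condExp integrable_condExp
    _ = ∫ ω in s, P[f | m'] ω * (P⟦t | m'⟧) ω ∂P := by simp_rw [mul_comm]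
    _ = ∫ ω in s, f ω * (P⟦t | m'⟧) ω ∂P :=
        setIntegral_condExp_mul hm' hs stronglyMeasurable_condExp
          (hfi.mul_bdd integrable_condExp.aestronglyMeasurable (norm_condExp_indicator_le_one t))
          hfi
    _ = ∫ ω in s, (P⟦t | m' ⊔ m₁⟧) ω * f ω ∂P :=
        setIntegral_congr_ae (hm' s hs) (hswap.mono fun ω h _ => by rw [h, mul_comm])
    _ = ∫ ω in s ∩ t, f ω ∂P :=
        (setIntegral_inter_eq_setIntegral_condExp_indicator_mul (sup_le hm' hm₁)
          (le_sup_left (b := m₁) s hs) (hm₂ t ht) (hf.mono le_sup_right) hfi).symm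

end ProbabilityTheory

theorem condexp_sup_comap_of_condIndepFun_general
    {Ω : Type*} [mΩ : MeasurableSpace Ω] [StandardBorelSpace Ω]
    {𝓤 : Type*} [MeasurableSpace 𝓤]
    (P : Measure Ω) [IsProbabilityMeasure P]
    (W : Ω → ℝ) (U : Ω → 𝓤)
    (hW : Measurable W) (hU : Measurable U)
    (𝓖 : MeasurableSpace Ω) (h𝓖 : 𝓖 ≤ mΩ)
    (hindep : CondIndepFun 𝓖 h𝓖 W U P) :
    P[W | 𝓖 ⊔ MeasurableSpace.comap U inferInstance] =ᵐ[P] P[W | 𝓖] := by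
  by_cases hWi : Integrable W P
  · exact ((condIndepFun_iff_condIndep 𝓖 h𝓖 W U P).1 hindep).condExp_sup_eq
      hW.comap_le hU.comap_le (comap_measurable W).stronglyMeasurable hWi
  · simp [condExp_of_not_integrable hWi]

/-- An adjustment variable does not change the propensity score: if `W` is bounded measurable
and conditionally independent of `U` given a sub-σ-algebra `𝓖`, then
`E[W | 𝓖 ⊔ σ(U)] = E[W | 𝓖]` almost everywhere. -/
theorem condexp_sup_comap_of_condIndepFun
    {Ω : Type*} [mΩ : MeasurableSpace Ω] [StandardBorelSpace Ω]
    {𝓤 : Type*} [MeasurableSpace 𝓤] [StandardBorelSpace 𝓤]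
    (P : Measure Ω) [IsProbabilityMeasure P]
    (W : Ω → ℝ) (U : Ω → 𝓤)
    (hW : Measurable W) (hU : Measurable U)
    (hWbdd : ∃ C : ℝ, ∀ ω, |W ω| ≤ C)
    (𝓖 : MeasurableSpace Ω) (h𝓖 : 𝓖 ≤ mΩ)
    (hindep : CondIndepFun 𝓖 h𝓖 W U P) :
    P[W | 𝓖 ⊔ MeasurableSpace.comap U inferInstance] =ᵐ[P] P[W | 𝓖] :=
  condexp_sup_comap_of_condIndepFun_general (mΩ := mΩ) P W U hW hU 𝓖 h𝓖 hindep
end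

section
/- Sequential ignorability augmented by the latent substitute (structural form of Theorem 1): let H : Ω → 𝓗, ε : Ω → E, Z : Ω → 𝓩 and Y : Ω → ℝ be measurable random variables with values in standard Borel spaces, let k : 𝓗 × E → ℝ be measurable, and set W = k(H, ε). If ε is conditionally independent of the pair (Y, Z) given σ(H), then Y is conditionally independent of W given the σ-algebra σ(H) ⊔ σ(Z). -/
/-!
Write `σH, σZ, σY, σε` for the σ-algebras generated by the variables. The hypothesis says that
`σε` is independent of `σZ ⊔ σY` given `σH`. By the weak union property of conditional
independence this gives `σε ⊥ σY | σH ⊔ σZ`, and since `σH` already lies in the conditioning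
σ-algebra it may be adjoined to `σε`, which makes `W = k(H, ε)` measurable on that side.
Weak union follows from the characterisation `m₁ ⊥ m₂ | m ↔ P[t | m ⊔ m₁] = P[t | m]` for
`t ∈ m₂`; for its forward direction one first enlarges `m₁` to `m ⊔ m₁` by a π-system argument.
-/

open MeasureTheory ProbabilityTheory MeasurableSpace Set

section CondExpIndicator

variable {Ω : Type*} {m mΩ : MeasurableSpace Ω} {μ : Measure Ω} [IsFiniteMeasure μ] {s t : Set Ω}

lemma condExp_inter_indicator_of_measurableSet_left (hs : MeasurableSet[m] s)
    (ht : MeasurableSet t) : μ⟦s ∩ t | m⟧ =ᵐ[μ] s.indicator (μ⟦t | m⟧) := by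
  rw [← indicator_indicator]
  exact condExp_indicator ((integrable_const 1).indicator ht) hs

lemma condExp_indicator_condExp (hs : MeasurableSet s) (f : Ω → ℝ) :
    μ[s.indicator (μ[f | m]) | m] =ᵐ[μ] μ⟦s | m⟧ * μ[f | m] := by
  have hmul : s.indicator (μ[f | m]) = s.indicator (fun _ ↦ (1 : ℝ)) * μ[f | m] := by
    ext x
    by_cases hx : x ∈ s <;> simp [hx]
  rw [hmul]
  exact condExp_mul_of_stronglyMeasurable_right stronglyMeasurable_condExp
    (hmul ▸ integrable_condExp.indicator hs) ((integrable_const 1).indicator hs)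

lemma setIntegral_condExp_eq_integral_condExp_indicator_mul (hm : m ≤ mΩ) (hs : MeasurableSet s)
    (f : Ω → ℝ) : ∫ x in s, μ[f | m] x ∂μ = ∫ x, (μ⟦s | m⟧ * μ[f | m]) x ∂μ := by
  rw [← integral_indicator hs, ← integral_condExp hm]
  exact integral_congr_ae (condExp_indicator_condExp hs f)

end CondExpIndicator

section PiSystem

variable {Ω : Type*} {m₁ m₂ : MeasurableSpace Ω}

lemma isPiSystem_image2_inter_measurableSet :
    IsPiSystem (image2 (· ∩ ·) {s | MeasurableSet[m₁] s} {s | MeasurableSet[m₂] s}) := by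
  rintro _ ⟨a, ha, b, hb, rfl⟩ _ ⟨c, hc, d, hd, rfl⟩ -
  exact ⟨a ∩ c, ha.inter hc, b ∩ d, hb.inter hd, inter_inter_inter_comm a c b d⟩

lemma generateFrom_image2_inter_measurableSet :
    generateFrom (image2 (· ∩ ·) {s | MeasurableSet[m₁] s} {s | MeasurableSet[m₂] s})
      = m₁ ⊔ m₂ := by
  refine le_antisymm (generateFrom_le ?_) (sup_le (fun s hs ↦ ?_) (fun s hs ↦ ?_))
  · rintro _ ⟨a, ha, b, hb, rfl⟩
    exact (le_sup_left (b := m₂) _ ha).inter (le_sup_right (a := m₁) _ hb)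
  · exact measurableSet_generateFrom ⟨s, hs, univ, MeasurableSet.univ, inter_univ s⟩
  · exact measurableSet_generateFrom ⟨univ, MeasurableSet.univ, s, hs, univ_inter s⟩

end PiSystem

namespace ProbabilityTheory

variable {Ω : Type*} {m m₁ m₂ m₃ mΩ : MeasurableSpace Ω} [StandardBorelSpace Ω]
  {hm : m ≤ mΩ} {μ : Measure Ω} [IsFiniteMeasure μ]

theorem CondIndep.sup_self_left (hm₁ : m₁ ≤ mΩ) (hm₂ : m₂ ≤ mΩ)
    (h : CondIndep m m₁ m₂ hm μ) : CondIndep m (m ⊔ m₁) m₂ hm μ := by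
  refine CondIndepSets.condIndep (sup_le hm hm₁) hm₂ isPiSystem_image2_inter_measurableSet
    (@isPiSystem_measurableSet Ω m₂) generateFrom_image2_inter_measurableSet.symm
    (@generateFrom_measurableSet Ω m₂).symm ?_
  rw [condIndepSets_iff]
  rotate_left
  · rintro _ ⟨a, ha, b, hb, rfl⟩
    exact (hm _ ha).inter (hm₁ _ hb)
  · exact fun s hs ↦ hm₂ _ hs
  rintro _ c ⟨a, ha, b, hb, rfl⟩ hc
  have hbc := (condIndep_iff _ _ _ hm hm₁ hm₂ μ).1 h b c hb hc
  calc μ⟦a ∩ b ∩ c | m⟧ =ᵐ[μ] a.indicator (μ⟦b ∩ c | m⟧) := by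
        rw [inter_assoc]
        exact condExp_inter_indicator_of_measurableSet_left ha ((hm₁ _ hb).inter (hm₂ _ hc))
    _ =ᵐ[μ] a.indicator (μ⟦b | m⟧ * μ⟦c | m⟧) := hbc.mono fun x hx ↦ by simp only [indicator, hx]
    _ = a.indicator (μ⟦b | m⟧) * μ⟦c | m⟧ := funext fun x ↦ indicator_mul_left a _ _
    _ =ᵐ[μ] μ⟦a ∩ b | m⟧ * μ⟦c | m⟧ :=
        (condExp_inter_indicator_of_measurableSet_left ha (hm₁ _ hb)).symm.mul .rfl

theorem CondIndep.sup_self_right (hm₁ : m₁ ≤ mΩ) (hm₂ : m₂ ≤ mΩ)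
    (h : CondIndep m m₁ m₂ hm μ) : CondIndep m m₁ (m ⊔ m₂) hm μ :=
  (h.symm.sup_self_left hm₂ hm₁).symm

theorem condIndep_iff_condExp_indicator_sup_eq (hm₁ : m₁ ≤ mΩ) (hm₂ : m₂ ≤ mΩ) :
    CondIndep m m₁ m₂ hm μ ↔ ∀ t, MeasurableSet[m₂] t → μ⟦t | m ⊔ m₁⟧ =ᵐ[μ] μ⟦t | m⟧ := by
  have hmm₁ : m ⊔ m₁ ≤ mΩ := sup_le hm hm₁
  constructor
  · intro h t ht
    have h' := (condIndep_iff _ _ _ hm hmm₁ hm₂ μ).1 (h.sup_self_left hm₁ hm₂)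
    refine (ae_eq_condExp_of_forall_setIntegral_eq hmm₁
      ((integrable_const 1).indicator (hm₂ _ ht)) (fun _ _ _ ↦ integrable_condExp.integrableOn)
      (fun s hs _ ↦ ?_)
      (stronglyMeasurable_condExp.mono (le_sup_left (b := m₁))).aestronglyMeasurable).symm
    rw [setIntegral_condExp_eq_integral_condExp_indicator_mul hm (hmm₁ _ hs),
      ← integral_indicator (hmm₁ _ hs), indicator_indicator]
    exact (integral_congr_ae (h' s t hs ht)).symm.trans (integral_condExp hm)
  · intro h
    refine (condIndep_iff _ _ _ hm hm₁ hm₂ μ).2 fun s t hs ht ↦ ?_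
    calc μ⟦s ∩ t | m⟧ =ᵐ[μ] μ[μ⟦s ∩ t | m ⊔ m₁⟧ | m] :=
          (condExp_condExp_of_le le_sup_left hmm₁).symm
      _ =ᵐ[μ] μ[s.indicator (μ⟦t | m ⊔ m₁⟧) | m] := condExp_congr_ae
          (condExp_inter_indicator_of_measurableSet_left (le_sup_right (a := m) _ hs) (hm₂ _ ht))
      _ =ᵐ[μ] μ[s.indicator (μ⟦t | m⟧) | m] :=
          condExp_congr_ae ((h t ht).mono fun x hx ↦ by simp only [indicator, hx])
      _ =ᵐ[μ] μ⟦s | m⟧ * μ⟦t | m⟧ := condExp_indicator_condExp (hm₁ _ hs) _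

theorem CondIndep.weak_union (hm₁ : m₁ ≤ mΩ) (hm₂ : m₂ ≤ mΩ) (hm₃ : m₃ ≤ mΩ)
    (h : CondIndep m (m₁ ⊔ m₂) m₃ hm μ) : CondIndep (m ⊔ m₁) m₂ m₃ (sup_le hm hm₁) μ := by
  refine (condIndep_iff_condExp_indicator_sup_eq hm₂ hm₃).2 fun t ht ↦ ?_
  have h₁₂ := (condIndep_iff_condExp_indicator_sup_eq (sup_le hm₁ hm₂) hm₃).1 h t ht
  have h₁ := (condIndep_iff_condExp_indicator_sup_eq hm₁ hm₃).1
    (condIndep_of_condIndep_of_le_left h le_sup_left) t ht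
  rw [sup_assoc]
  exact h₁₂.trans h₁.symm

end ProbabilityTheory

theorem sequential_ignorability_augmented_general
    {Ω : Type*} [MeasurableSpace Ω] [StandardBorelSpace Ω]
    {𝓗 E 𝓩 : Type*}
    [MeasurableSpace 𝓗]
    [MeasurableSpace E]
    [MeasurableSpace 𝓩]
    (P : Measure Ω) [IsProbabilityMeasure P]
    (H : Ω → 𝓗) (ε : Ω → E) (Z : Ω → 𝓩) (Y W : Ω → ℝ)
    (hH : Measurable H) (hε : Measurable ε) (hZ : Measurable Z) (hY : Measurable Y)
    (k : 𝓗 × E → ℝ) (hk : Measurable k)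
    (hWdef : ∀ ω, W ω = k (H ω, ε ω))
    (hindep : CondIndepFun (MeasurableSpace.comap H inferInstance) hH.comap_le
      ε (fun ω => (Y ω, Z ω)) P) :
    CondIndepFun
      (MeasurableSpace.comap H inferInstance ⊔ MeasurableSpace.comap Z inferInstance)
      (sup_le hH.comap_le hZ.comap_le) Y W P := by
  set σH := MeasurableSpace.comap H inferInstance
  set σZ := MeasurableSpace.comap Z inferInstance
  set σY := MeasurableSpace.comap Y inferInstance
  set σε := MeasurableSpace.comap ε inferInstance
  have hW : MeasurableSpace.comap W inferInstance ≤ σH ⊔ σε := by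
    rw [show W = k ∘ fun ω ↦ (H ω, ε ω) from funext hWdef, ← comap_comp, ← comap_prodMk]
    exact comap_mono hk.comap_le
  have h : CondIndep σH (σZ ⊔ σY) σε hH.comap_le P := by
    rw [sup_comm, ← comap_prodMk]
    exact ((condIndepFun_iff_condIndep _ _ _ _ _).1 hindep).symm
  rw [condIndepFun_iff_condIndep]
  exact condIndep_of_condIndep_of_le_right
    ((h.weak_union hZ.comap_le hY.comap_le hε.comap_le).sup_self_right hY.comap_le hε.comap_le)
    (hW.trans (sup_le_sup_right le_sup_left _))

/-- **Sequential ignorability augmented by the latent substitute** (structural form of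
Theorem 1): if the treatment `W = k(H, ε)` is a randomized function of the context history
`H`, and the randomization noise `ε` is conditionally independent of the pair `(Y, Z)`
given `σ(H)`, then `Y` is conditionally independent of `W` given `σ(H) ⊔ σ(Z)`. -/
theorem sequential_ignorability_augmented
    {Ω : Type*} [MeasurableSpace Ω] [StandardBorelSpace Ω]
    {𝓗 E 𝓩 : Type*}
    [MeasurableSpace 𝓗] [StandardBorelSpace 𝓗]
    [MeasurableSpace E] [StandardBorelSpace E]
    [MeasurableSpace 𝓩] [StandardBorelSpace 𝓩]
    (P : Measure Ω) [IsProbabilityMeasure P]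
    (H : Ω → 𝓗) (ε : Ω → E) (Z : Ω → 𝓩) (Y W : Ω → ℝ)
    (hH : Measurable H) (hε : Measurable ε) (hZ : Measurable Z) (hY : Measurable Y)
    (k : 𝓗 × E → ℝ) (hk : Measurable k)
    (hWdef : ∀ ω, W ω = k (H ω, ε ω))
    (hindep : CondIndepFun (MeasurableSpace.comap H inferInstance) hH.comap_le
      ε (fun ω => (Y ω, Z ω)) P) :
    CondIndepFun
      (MeasurableSpace.comap H inferInstance ⊔ MeasurableSpace.comap Z inferInstance)
      (sup_le hH.comap_le hZ.comap_le) Y W P :=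
  sequential_ignorability_augmented_general P H ε Z Y W hH hε hZ hY k hk hWdef hindep
end

section
/- Generalization bound for the weighted PEHE (first part of the theorem, noiseless squared-loss version): let (R, 𝓑) be a measurable space with probability measure ρ, let e : R → ℝ be measurable with 0 < e(r) < 1 for all r, set u = ∫ e dρ and assume 0 < u < 1, and define the treatment-arm measures ρ₁(A) = (1/u) ∫_A e dρ and ρ₀(A) = (1/(1−u)) ∫_A (1−e) dρ. Let m₁, m₀, f₁, f₀ : R → ℝ be measurable with squared losses ℓ₁ = (m₁ − f₁)² and ℓ₀ = (m₀ − f₀)² integrable with respect to ρ, ρ₁ and ρ₀. Let G be a set of measurable functions R → ℝ, let B > 0 with ℓ₁/B ∈ G and ℓ₀/B ∈ G, and define IPM_G(μ, ν) = sup_{g ∈ G} |∫ g dμ − ∫ g dν|, assumed finite on (ρ₁, ρ₀). Then the PEHE ∫ ((m₁ − m₀) − (f₁ − f₀))² dρ is at most 2 (∫ ℓ₁ dρ₁ + ∫ ℓ₀ dρ₀) + 2 B · IPM_G(ρ₁, ρ₀). -/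
open MeasureTheory
open scoped ENNReal

/-!
Since `e` and `1 - e` add up to one, `ρ` is the mixture `u • ρ₁ + (1 - u) • ρ₀` of the two arm
distributions, so the risk of each head on `ρ` is a convex combination of its risks on the two
arms. The counterfactual risk (of `f₁` on `ρ₀`, of `f₀` on `ρ₁`) differs from the factual one by
at most `B · IPM_G(ρ₁, ρ₀)`, because the loss rescaled by `B` lies in `G`. Together with the
pointwise bound `(x - y)² ≤ 2x² + 2y²` this gives the estimate.
-/

section

variable {R : Type*} [MeasurableSpace R]

/-- The Integral Probability Metric `IPM_G(μ, ν)`; it is meaningful only when the set of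
differences is bounded above, `sSup` being `0` otherwise. -/
noncomputable def ipm (G : Set (R → ℝ)) (μ ν : Measure R) : ℝ :=
  sSup ((fun g : R → ℝ => |(∫ r, g r ∂μ) - ∫ r, g r ∂ν|) '' G)

theorem abs_integral_sub_le_mul_ipm {G : Set (R → ℝ)} {μ ν : Measure R}
    (hbdd : BddAbove ((fun g : R → ℝ => |(∫ r, g r ∂μ) - ∫ r, g r ∂ν|) '' G))
    {B : ℝ} (hB : 0 < B) {g : R → ℝ} (hg : (fun r => g r / B) ∈ G) :
    |(∫ r, g r ∂μ) - ∫ r, g r ∂ν| ≤ B * ipm G μ ν := by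
  have hle : |(∫ r, g r / B ∂μ) - ∫ r, g r / B ∂ν| ≤ ipm G μ ν :=
    le_csSup hbdd ⟨_, hg, rfl⟩
  rwa [integral_div, integral_div, div_sub_div_same, abs_div, abs_of_pos hB,
    div_le_iff₀ hB, mul_comm] at hle

theorem withDensity_ofReal_add_withDensity_ofReal_one_sub (μ : Measure R) {e : R → ℝ}
    (he : Measurable e) (he01 : ∀ r, 0 ≤ e r ∧ e r ≤ 1) :
    μ.withDensity (fun r => ENNReal.ofReal (e r)) +
      μ.withDensity (fun r => ENNReal.ofReal (1 - e r)) = μ := by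
  rw [← withDensity_add_left he.ennreal_ofReal]
  convert withDensity_one (μ := μ)
  funext r
  rw [Pi.add_apply, ← ENNReal.ofReal_add (he01 r).1 (sub_nonneg.2 (he01 r).2), add_sub_cancel,
    ENNReal.ofReal_one, Pi.one_apply]

theorem eq_smul_inv_smul_add_smul_inv_smul (μ : Measure R) {e : R → ℝ}
    (he : Measurable e) (he01 : ∀ r, 0 ≤ e r ∧ e r ≤ 1) {u : ℝ} (hu0 : 0 < u) (hu1 : u < 1) :
    μ = ENNReal.ofReal u • (ENNReal.ofReal u)⁻¹ •
          μ.withDensity (fun r => ENNReal.ofReal (e r)) +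
        ENNReal.ofReal (1 - u) • (ENNReal.ofReal (1 - u))⁻¹ •
          μ.withDensity (fun r => ENNReal.ofReal (1 - e r)) := by
  have cancel : ∀ {c : ℝ}, 0 < c → ENNReal.ofReal c * (ENNReal.ofReal c)⁻¹ = 1 := fun hc =>
    ENNReal.mul_inv_cancel (ENNReal.ofReal_pos.2 hc).ne' ENNReal.ofReal_ne_top
  rw [smul_smul, smul_smul, cancel hu0, cancel (sub_pos.2 hu1), one_smul, one_smul,
    withDensity_ofReal_add_withDensity_ofReal_one_sub μ he he01]

theorem integral_smul_add_smul_measure {μ ν : Measure R} {u : ℝ} (hu0 : 0 ≤ u) (hu1 : u ≤ 1)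
    {g : R → ℝ} (hμ : Integrable g μ) (hν : Integrable g ν) :
    ∫ r, g r ∂(ENNReal.ofReal u • μ + ENNReal.ofReal (1 - u) • ν) =
      u * ∫ r, g r ∂μ + (1 - u) * ∫ r, g r ∂ν := by
  rw [integral_add_measure (hμ.smul_measure ENNReal.ofReal_ne_top)
      (hν.smul_measure ENNReal.ofReal_ne_top), integral_smul_measure, integral_smul_measure,
    ENNReal.toReal_ofReal hu0, ENNReal.toReal_ofReal (sub_nonneg.2 hu1), smul_eq_mul, smul_eq_mul]

theorem integral_sq_sub_sub_sub_le (μ : Measure R) {a b c d : R → ℝ}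
    (hac : Integrable (fun r => (a r - c r) ^ 2) μ)
    (hbd : Integrable (fun r => (b r - d r) ^ 2) μ) :
    ∫ r, ((a r - b r) - (c r - d r)) ^ 2 ∂μ ≤
      2 * ∫ r, (a r - c r) ^ 2 ∂μ + 2 * ∫ r, (b r - d r) ^ 2 ∂μ := by
  rw [← integral_const_mul, ← integral_const_mul,
    ← integral_add (hac.const_mul 2) (hbd.const_mul 2)]
  refine integral_mono_of_nonneg (.of_forall fun r => sq_nonneg _)
    ((hac.const_mul 2).add (hbd.const_mul 2)) (.of_forall fun r => ?_)
  nlinarith [sq_nonneg (a r - c r + (b r - d r))]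

end

theorem pehe_generalization_bound_general
    {R : Type*} [MeasurableSpace R]
    (ρ : Measure R)
    (e : R → ℝ) (he : Measurable e) (he01 : ∀ r, 0 < e r ∧ e r < 1)
    (u : ℝ) (hu0 : 0 < u) (hu1 : u < 1)
    (ρ₁ ρ₀ : Measure R)
    (hρ₁ : ρ₁ = (ENNReal.ofReal u)⁻¹ • ρ.withDensity (fun r => ENNReal.ofReal (e r)))
    (hρ₀ : ρ₀ = (ENNReal.ofReal (1 - u))⁻¹ •
      ρ.withDensity (fun r => ENNReal.ofReal (1 - e r)))
    (m₁ m₀ f₁ f₀ : R → ℝ)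
    (hℓ₁ρ : Integrable (fun r => (m₁ r - f₁ r) ^ 2) ρ)
    (hℓ₁ρ₁ : Integrable (fun r => (m₁ r - f₁ r) ^ 2) ρ₁)
    (hℓ₁ρ₀ : Integrable (fun r => (m₁ r - f₁ r) ^ 2) ρ₀)
    (hℓ₀ρ : Integrable (fun r => (m₀ r - f₀ r) ^ 2) ρ)
    (hℓ₀ρ₁ : Integrable (fun r => (m₀ r - f₀ r) ^ 2) ρ₁)
    (hℓ₀ρ₀ : Integrable (fun r => (m₀ r - f₀ r) ^ 2) ρ₀)
    (G : Set (R → ℝ))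
    (B : ℝ) (hB : 0 < B)
    (hℓ₁G : (fun r => (m₁ r - f₁ r) ^ 2 / B) ∈ G)
    (hℓ₀G : (fun r => (m₀ r - f₀ r) ^ 2 / B) ∈ G)
    (hIPMfin : BddAbove ((fun g : R → ℝ => |(∫ r, g r ∂ρ₁) - ∫ r, g r ∂ρ₀|) '' G)) :
    ∫ r, ((m₁ r - m₀ r) - (f₁ r - f₀ r)) ^ 2 ∂ρ ≤
      2 * ((∫ r, (m₁ r - f₁ r) ^ 2 ∂ρ₁) + ∫ r, (m₀ r - f₀ r) ^ 2 ∂ρ₀)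
        + 2 * B * sSup ((fun g : R → ℝ => |(∫ r, g r ∂ρ₁) - ∫ r, g r ∂ρ₀|) '' G) := by
  have hmix : ρ = ENNReal.ofReal u • ρ₁ + ENNReal.ofReal (1 - u) • ρ₀ := by
    subst hρ₁ hρ₀
    exact eq_smul_inv_smul_add_smul_inv_smul ρ he (fun r => ⟨(he01 r).1.le, (he01 r).2.le⟩) hu0 hu1
  have h₁ := abs_le.1 (abs_integral_sub_le_mul_ipm hIPMfin hB hℓ₁G)
  have h₀ := abs_le.1 (abs_integral_sub_le_mul_ipm hIPMfin hB hℓ₀G)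
  have hρℓ₁ := integral_smul_add_smul_measure hu0.le hu1.le hℓ₁ρ₁ hℓ₁ρ₀
  have hρℓ₀ := integral_smul_add_smul_measure hu0.le hu1.le hℓ₀ρ₁ hℓ₀ρ₀
  rw [← hmix] at hρℓ₁ hρℓ₀
  calc ∫ r, ((m₁ r - m₀ r) - (f₁ r - f₀ r)) ^ 2 ∂ρ
      ≤ 2 * ∫ r, (m₁ r - f₁ r) ^ 2 ∂ρ + 2 * ∫ r, (m₀ r - f₀ r) ^ 2 ∂ρ :=
        integral_sq_sub_sub_sub_le ρ hℓ₁ρ hℓ₀ρ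
    _ ≤ _ := by
        rw [hρℓ₁, hρℓ₀]
        change _ ≤ _ + 2 * B * ipm G ρ₁ ρ₀
        linarith [mul_le_mul_of_nonneg_left h₁.1 (sub_pos.2 hu1).le,
          mul_le_mul_of_nonneg_left h₀.2 hu0.le]

/-- **Generalization bound for the weighted PEHE** (first part of the theorem, noiseless
squared-loss version): the PEHE over the target population `ρ` is at most twice the sum of
the factual risks on the two treatment arms plus `2 B` times the Integral Probability
Metric between the treated and control covariate distributions `ρ₁` and `ρ₀`. -/
theorem pehe_generalization_bound
    {R : Type*} [MeasurableSpace R]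
    (ρ : Measure R) [IsProbabilityMeasure ρ]
    (e : R → ℝ) (he : Measurable e) (he01 : ∀ r, 0 < e r ∧ e r < 1)
    (u : ℝ) (hu : u = ∫ r, e r ∂ρ) (hu0 : 0 < u) (hu1 : u < 1)
    (ρ₁ ρ₀ : Measure R)
    (hρ₁ : ρ₁ = (ENNReal.ofReal u)⁻¹ • ρ.withDensity (fun r => ENNReal.ofReal (e r)))
    (hρ₀ : ρ₀ = (ENNReal.ofReal (1 - u))⁻¹ •
      ρ.withDensity (fun r => ENNReal.ofReal (1 - e r)))
    (m₁ m₀ f₁ f₀ : R → ℝ)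
    (hm₁ : Measurable m₁) (hm₀ : Measurable m₀)
    (hf₁ : Measurable f₁) (hf₀ : Measurable f₀)
    (hℓ₁ρ : Integrable (fun r => (m₁ r - f₁ r) ^ 2) ρ)
    (hℓ₁ρ₁ : Integrable (fun r => (m₁ r - f₁ r) ^ 2) ρ₁)
    (hℓ₁ρ₀ : Integrable (fun r => (m₁ r - f₁ r) ^ 2) ρ₀)
    (hℓ₀ρ : Integrable (fun r => (m₀ r - f₀ r) ^ 2) ρ)
    (hℓ₀ρ₁ : Integrable (fun r => (m₀ r - f₀ r) ^ 2) ρ₁)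
    (hℓ₀ρ₀ : Integrable (fun r => (m₀ r - f₀ r) ^ 2) ρ₀)
    (G : Set (R → ℝ)) (hG : ∀ g ∈ G, Measurable g)
    (B : ℝ) (hB : 0 < B)
    (hℓ₁G : (fun r => (m₁ r - f₁ r) ^ 2 / B) ∈ G)
    (hℓ₀G : (fun r => (m₀ r - f₀ r) ^ 2 / B) ∈ G)
    (hIPMfin : BddAbove ((fun g : R → ℝ => |(∫ r, g r ∂ρ₁) - ∫ r, g r ∂ρ₀|) '' G)) :
    ∫ r, ((m₁ r - m₀ r) - (f₁ r - f₀ r)) ^ 2 ∂ρ ≤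
      2 * ((∫ r, (m₁ r - f₁ r) ^ 2 ∂ρ₁) + ∫ r, (m₀ r - f₀ r) ^ 2 ∂ρ₀)
        + 2 * B * sSup ((fun g : R → ℝ => |(∫ r, g r ∂ρ₁) - ∫ r, g r ∂ρ₀|) '' G) :=
  pehe_generalization_bound_general ρ e he he01 u hu0 hu1 ρ₁ ρ₀ hρ₁ hρ₀ m₁ m₀ f₁ f₀ hℓ₁ρ hℓ₁ρ₁ hℓ₁ρ₀
    hℓ₀ρ hℓ₀ρ₁ hℓ₀ρ₀ G B hB hℓ₁G hℓ₀G hIPMfin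
end
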